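/- arXiv:2312.11253 — 6 statements merged into one kernel-verified Lean document; each statement's English description precedes it below -/
import Mathlib

section
/- If (X̄, ȳ, S̄) is an ε-optimal solution to the refining problem (i.e., A_i • X̄ = 0 for all i, X̄ ⪰ -ηX, S̄ = ηS - Σᵢ ȳᵢAᵢ ⪰ 0, and (ηX + X̄) • S̄ ≤ ε), and (X, y, S) is feasible for the primal-dual SDO pair, then the updated solution (X + (1/η)X̄, y + (1/η)ȳ, C - Σᵢ (yᵢ + (1/η)ȳᵢ)Aᵢ) is feasible for the primal-dual SDO pair. -/
open Matrix Finset

/-! The update is the refining solution scaled back by `η⁻¹`: the new primal matrix is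
`η⁻¹ (X̄ + ηX)` and the new dual slack is `η⁻¹ S̄`, both positive semidefinite, while
`Aᵢ • X̄ = 0` leaves the primal constraints untouched. -/

theorem Matrix.trace_mul_add_smul_of_trace_mul_eq_zero {ι R : Type*} [Fintype ι] [CommSemiring R]
    {A X Y : Matrix ι ι R} (c : R) (hY : (A * Y).trace = 0) :
    (A * (X + c • Y)).trace = (A * X).trace := by
  rw [mul_add, trace_add, Matrix.mul_smul, trace_smul, hY, smul_zero, add_zero]

theorem add_inv_smul_eq_inv_smul_sub_neg_smul {K M : Type*} [DivisionRing K] [AddCommGroup M]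
    [Module K M] {η : K} (hη : η ≠ 0) (X Y : M) :
    X + η⁻¹ • Y = η⁻¹ • (Y - (-η) • X) := by
  rw [smul_sub, smul_smul, mul_neg, inv_mul_cancel₀ hη, neg_smul, one_smul, sub_neg_eq_add,
    add_comm]

theorem sub_sum_add_inv_mul_smul_eq_inv_smul {ι K M : Type*} [Fintype ι] [DivisionRing K]
    [AddCommGroup M] [Module K M] {η : K} (hη : η ≠ 0) {A : ι → M} {C S : M} {y ybar : ι → K}
    (hC : (∑ i, y i • A i) + S = C) :
    C - ∑ i, (y i + η⁻¹ * ybar i) • A i = η⁻¹ • (η • S - ∑ i, ybar i • A i) := by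
  simp only [add_smul, ← smul_smul, sum_add_distrib, ← smul_sum, smul_sub, inv_smul_smul₀ hη,
    ← hC]
  abel

theorem refining_update_feasible_general {n m : ℕ}
    (A : Fin m → Matrix (Fin n) (Fin n) ℝ) (C : Matrix (Fin n) (Fin n) ℝ)
    (b : Fin m → ℝ) (η : ℝ) (hη : 1 ≤ η)
    (X S Xbar Sbar : Matrix (Fin n) (Fin n) ℝ) (y ybar : Fin m → ℝ)
    -- feasibility of the current iterate (X, y, S)
    (hXfeas : ∀ i, (A i * X).trace = b i)
    (hSfeas : (∑ i, y i • A i) + S = C)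
    -- ε-optimal solution of the refining problem
    (hXbarfeas : ∀ i, (A i * Xbar).trace = 0)
    (hXbarpsd : (Xbar - (-η) • X).PosSemidef)
    (hSbar : Sbar = η • S - ∑ i, ybar i • A i)
    (hSbarpsd : Sbar.PosSemidef) :
    -- the updated solution is feasible for the primal-dual SDO pair
    (∀ i, (A i * (X + η⁻¹ • Xbar)).trace = b i) ∧
    (X + η⁻¹ • Xbar).PosSemidef ∧
    (∑ i, (y i + η⁻¹ * ybar i) • A i) +
      (C - ∑ i, (y i + η⁻¹ * ybar i) • A i) = C ∧
    (C - ∑ i, (y i + η⁻¹ * ybar i) • A i).PosSemidef := by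
  have hη₀ : η ≠ 0 := (zero_lt_one.trans_le hη).ne'
  have hηinv : 0 ≤ η⁻¹ := inv_nonneg.2 (zero_le_one.trans hη)
  refine ⟨fun i => ?_, ?_, add_sub_cancel _ _, ?_⟩
  · rw [trace_mul_add_smul_of_trace_mul_eq_zero _ (hXbarfeas i), hXfeas i]
  · rw [add_inv_smul_eq_inv_smul_sub_neg_smul hη₀]
    exact hXbarpsd.smul hηinv
  · rw [sub_sum_add_inv_mul_smul_eq_inv_smul hη₀ hSfeas, ← hSbar]
    exact hSbarpsd.smul hηinv

/-- If `(X̄, ȳ, S̄)` is an ε-optimal solution to the refining problem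
(`Aᵢ • X̄ = 0` for all `i`, `X̄ ⪰ -ηX`, `S̄ = ηS - Σᵢ ȳᵢ Aᵢ ⪰ 0`, `(ηX + X̄) • S̄ ≤ ε`),
and `(X, y, S)` is feasible for the primal-dual SDO pair, then the updated solution
`(X + (1/η)X̄, y + (1/η)ȳ, C - Σᵢ (yᵢ + (1/η)ȳᵢ) Aᵢ)` is feasible for the pair. -/
theorem refining_update_feasible {n m : ℕ}
    (A : Fin m → Matrix (Fin n) (Fin n) ℝ) (C : Matrix (Fin n) (Fin n) ℝ)
    (b : Fin m → ℝ) (ε η : ℝ) (hη : 1 ≤ η)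
    (X S Xbar Sbar : Matrix (Fin n) (Fin n) ℝ) (y ybar : Fin m → ℝ)
    -- feasibility of the current iterate (X, y, S)
    (hXfeas : ∀ i, (A i * X).trace = b i) (hXpsd : X.PosSemidef)
    (hSfeas : (∑ i, y i • A i) + S = C) (hSpsd : S.PosSemidef)
    -- ε-optimal solution of the refining problem
    (hXbarfeas : ∀ i, (A i * Xbar).trace = 0)
    (hXbarpsd : (Xbar - (-η) • X).PosSemidef)
    (hSbar : Sbar = η • S - ∑ i, ybar i • A i)
    (hSbarpsd : Sbar.PosSemidef)
    (hgap : ((η • X + Xbar) * Sbar).trace ≤ ε) :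
    -- the updated solution is feasible for the primal-dual SDO pair
    (∀ i, (A i * (X + η⁻¹ • Xbar)).trace = b i) ∧
    (X + η⁻¹ • Xbar).PosSemidef ∧
    (∑ i, (y i + η⁻¹ * ybar i) • A i) +
      (C - ∑ i, (y i + η⁻¹ * ybar i) • A i) = C ∧
    (C - ∑ i, (y i + η⁻¹ * ybar i) • A i).PosSemidef :=
  refining_update_feasible_general A C b η hη X S Xbar Sbar y ybar hXfeas hSfeas hXbarfeas hXbarpsd
    hSbar hSbarpsd
end

section
/- Let (X, y, S) be feasible for the primal-dual SDO pair with X • S > 0, let η = 1/(X • S), and let (X̄, ȳ, S̄) satisfy the refining-problem conditions A_i • X̄ = 0 for all i, ηX + X̄ ⪰ 0, S̄ = ηS - Σᵢ ȳᵢAᵢ ⪰ 0, and (ηX + X̄) • S̄ ≤ ε. Then the updated iterate satisfies (X + (1/η)X̄) • (C - Σᵢ(yᵢ + (1/η)ȳᵢ)Aᵢ) ≤ ε·(X • S)². -/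
open Matrix Finset

/-- Let `(X, y, S)` be feasible for the primal-dual SDO pair with
`X • S > 0`, let `η = 1/(X • S)`, and let `(X̄, ȳ, S̄)` satisfy the refining-problem
conditions. Then the updated iterate satisfies
`(X + (1/η)X̄) • (C - Σᵢ (yᵢ + (1/η)ȳᵢ) Aᵢ) ≤ ε (X • S)²`. -/
theorem refining_update_gap_quadratic {n m : ℕ}
    (A : Fin m → Matrix (Fin n) (Fin n) ℝ) (C : Matrix (Fin n) (Fin n) ℝ)
    (b : Fin m → ℝ) (ε η : ℝ)
    (X S Xbar Sbar : Matrix (Fin n) (Fin n) ℝ) (y ybar : Fin m → ℝ)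
    -- feasibility of the current iterate (X, y, S)
    (hXfeas : ∀ i, (A i * X).trace = b i) (hXpsd : X.PosSemidef)
    (hSfeas : (∑ i, y i • A i) + S = C) (hSpsd : S.PosSemidef)
    -- positive duality gap and the scaling factor
    (hgappos : 0 < (X * S).trace)
    (hη : η = 1 / (X * S).trace)
    -- refining-problem conditions
    (hXbarfeas : ∀ i, (A i * Xbar).trace = 0)
    (hXbarpsd : (η • X + Xbar).PosSemidef)
    (hSbar : Sbar = η • S - ∑ i, ybar i • A i)
    (hSbarpsd : Sbar.PosSemidef)
    (hgap : ((η • X + Xbar) * Sbar).trace ≤ ε) :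
    ((X + η⁻¹ • Xbar) * (C - ∑ i, (y i + η⁻¹ * ybar i) • A i)).trace ≤
      ε * ((X * S).trace) ^ 2 := by
  have hinv : η⁻¹ = (X * S).trace := by rw [hη, one_div, inv_inv]
  have hηne : η ≠ 0 := by
    rw [hη]; exact one_div_ne_zero (ne_of_gt hgappos)
  have h1 : X + η⁻¹ • Xbar = η⁻¹ • (η • X + Xbar) := by
    rw [smul_add, smul_smul, inv_mul_cancel₀ hηne, one_smul]
  have h2 : C - ∑ i, (y i + η⁻¹ * ybar i) • A i = η⁻¹ • Sbar := by
    rw [hSbar, smul_sub, smul_smul, inv_mul_cancel₀ hηne, one_smul, ← hSfeas]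
    simp only [add_smul, Finset.sum_add_distrib, Finset.smul_sum, smul_smul]
    abel
  rw [h1, h2, Matrix.smul_mul, mul_smul_comm, smul_smul, trace_smul, smul_eq_mul]
  have hnn : (0:ℝ) ≤ η⁻¹ * η⁻¹ := by
    rw [hinv]; positivity
  calc η⁻¹ * η⁻¹ * ((η • X + Xbar) * Sbar).trace
      ≤ η⁻¹ * η⁻¹ * ε := mul_le_mul_of_nonneg_left hgap hnn
    _ = ε * ((X * S).trace) ^ 2 := by rw [hinv]; ring
end

section
/- If (X, y, S) lies in the Frobenius neighborhood N_F(γ) of the central path, i.e., X ≻ 0, S ≻ 0, and ‖X^{1/2} S X^{1/2} - μI‖_F ≤ γμ with μ = (X • S)/n and γ ∈ (0,1), and if all eigenvalues of X and S are at most ω, then every eigenvalue of X is at least (1-γ)μ/ω and every eigenvalue of S is at least (1-γ)μ/ω. -/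
/-!
Let `R = X^{1/2}`. Since a quadratic form is bounded by the Frobenius norm of its matrix, the
neighbourhood condition gives `vᵀ(RSR)v ≥ (1 - γ)μ‖v‖²` for all `v`. For a unit eigenvector `v` of
`X` with eigenvalue `λ` this yields `(1 - γ)μ ≤ (Rv)ᵀS(Rv) ≤ ω‖Rv‖² = ωλ`. For a unit eigenvector
`u` of `S` with eigenvalue `σ`, put `w = R⁻¹u`: then `(1 - γ)μ‖w‖² ≤ wᵀ(RSR)w = σ` and
`1 = wᵀXw ≤ ω‖w‖²`, hence `(1 - γ)μ ≤ ωσ`.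
-/

open Matrix

section
open scoped ComplexOrder

/-- The positive semidefinite square root of a positive semidefinite matrix
(restored: removed from Mathlib since the original was written). -/
noncomputable def Matrix.PosSemidef.sqrt {m : Type*} [Fintype m] [DecidableEq m] {𝕜 : Type*}
    [RCLike 𝕜] {A : Matrix m m 𝕜} (hA : A.PosSemidef) : Matrix m m 𝕜 :=
  hA.1.eigenvectorUnitary.1 * diagonal ((↑) ∘ (√·) ∘ hA.1.eigenvalues) *
  (star hA.1.eigenvectorUnitary : Matrix m m 𝕜)

end

/-- The Frobenius norm of a real square matrix. -/
noncomputable def frobeniusNorm' {n : ℕ} (M : Matrix (Fin n) (Fin n) ℝ) : ℝ :=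
  Real.sqrt (∑ i, ∑ j, (M i j) ^ 2)

open scoped ComplexOrder

namespace Matrix

section Sqrt

variable {n 𝕜 : Type*} [Fintype n] [DecidableEq n] [RCLike 𝕜] {A : Matrix n n 𝕜}

lemma PosSemidef.sqrt_eq_cfc (hA : A.PosSemidef) : hA.sqrt = cfc Real.sqrt A := by
  rw [hA.1.cfc_eq, IsHermitian.cfc, Unitary.conjStarAlgAut_apply]
  rfl

lemma PosSemidef.isHermitian_sqrt (hA : A.PosSemidef) : hA.sqrt.IsHermitian := by
  rw [hA.sqrt_eq_cfc]
  exact cfc_predicate _ _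

open MatrixOrder in
lemma PosSemidef.sqrt_mul_self (hA : A.PosSemidef) : hA.sqrt * hA.sqrt = A := by
  rw [hA.sqrt_eq_cfc, ← cfc_mul ..]
  conv_rhs => rw [← cfc_id' ℝ A]
  exact cfc_congr fun x hx => Real.mul_self_sqrt (spectrum_nonneg_of_nonneg hA.nonneg hx)

end Sqrt

section QuadraticForm

variable {n : Type*} [Fintype n]

lemma dotProduct_self_nonneg {R : Type*} [Ring R] [LinearOrder R] [IsStrictOrderedRing R]
    (v : n → R) : 0 ≤ v ⬝ᵥ v :=
  Fintype.sum_nonneg fun i => mul_self_nonneg (v i)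

lemma IsSymm.dotProduct_mulVec_comm {R : Type*} [CommSemiring R] {A : Matrix n n R}
    (hA : A.IsSymm) (v w : n → R) : v ⬝ᵥ A *ᵥ w = A *ᵥ v ⬝ᵥ w := by
  rw [dotProduct_mulVec, ← mulVec_transpose, hA.eq]

lemma IsSymm.dotProduct_mul_mul_mulVec {R : Type*} [CommSemiring R] {A B : Matrix n n R}
    (hA : A.IsSymm) (v : n → R) : v ⬝ᵥ (A * B * A) *ᵥ v = A *ᵥ v ⬝ᵥ B *ᵥ (A *ᵥ v) := by
  rw [← mulVec_mulVec, ← mulVec_mulVec, hA.dotProduct_mulVec_comm]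

variable [DecidableEq n] {A : Matrix n n ℝ}

lemma IsHermitian.dotProduct_self_eigenvectorBasis (hA : A.IsHermitian) (i : n) :
    ⇑(hA.eigenvectorBasis i) ⬝ᵥ ⇑(hA.eigenvectorBasis i) = 1 := by
  have h := real_inner_self_eq_norm_sq (hA.eigenvectorBasis i)
  rw [hA.eigenvectorBasis.orthonormal.1 i, one_pow, EuclideanSpace.inner_eq_star_dotProduct] at h
  exact h

lemma IsHermitian.dotProduct_eigenvectorBasis_mulVec (hA : A.IsHermitian) (i : n) :
    ⇑(hA.eigenvectorBasis i) ⬝ᵥ A *ᵥ ⇑(hA.eigenvectorBasis i) = hA.eigenvalues i := by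
  rw [hA.mulVec_eigenvectorBasis, dotProduct_smul, hA.dotProduct_self_eigenvectorBasis,
    smul_eq_mul, mul_one]

open MatrixOrder in
lemma IsHermitian.dotProduct_mulVec_le_of_eigenvalues_le (hA : A.IsHermitian) {ω : ℝ}
    (h : ∀ i, hA.eigenvalues i ≤ ω) (v : n → ℝ) : v ⬝ᵥ A *ᵥ v ≤ ω * (v ⬝ᵥ v) := by
  have hle : A ≤ algebraMap ℝ _ ω := le_algebraMap_of_spectrum_le
    (by rw [hA.spectrum_real_eq_range_eigenvalues]; rintro _ ⟨i, rfl⟩; exact h i) hA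
  have := (le_iff.mp hle).dotProduct_mulVec_nonneg v
  simp only [star_trivial, sub_mulVec, dotProduct_sub, Algebra.algebraMap_eq_smul_one,
    smul_mulVec, one_mulVec, dotProduct_smul, smul_eq_mul] at this
  linarith

end QuadraticForm

section Frobenius

lemma dotProduct_mulVec_eq_sum {n : Type*} [Fintype n] (B : Matrix n n ℝ) (v : n → ℝ) :
    v ⬝ᵥ B *ᵥ v = ∑ p : n × n, v p.1 * v p.2 * B p.1 p.2 := by
  simp only [dotProduct, mulVec, Finset.mul_sum, Fintype.sum_prod_type]
  exact Finset.sum_congr rfl fun i _ => Finset.sum_congr rfl fun j _ => by ring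

variable {m : ℕ}

lemma abs_dotProduct_mulVec_le_frobeniusNorm' (B : Matrix (Fin m) (Fin m) ℝ) (v : Fin m → ℝ) :
    |v ⬝ᵥ B *ᵥ v| ≤ frobeniusNorm' B * (v ⬝ᵥ v) := by
  have hv : ∑ p : Fin m × Fin m, (v p.1 * v p.2) ^ 2 = (v ⬝ᵥ v) ^ 2 := by
    simp only [sq, dotProduct, Finset.sum_mul_sum, Fintype.sum_prod_type]
    exact Finset.sum_congr rfl fun i _ => Finset.sum_congr rfl fun j _ => by ring
  have hB : ∑ p : Fin m × Fin m, B p.1 p.2 ^ 2 = ∑ i, ∑ j, B i j ^ 2 := Fintype.sum_prod_type _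
  rw [dotProduct_mulVec_eq_sum, frobeniusNorm', mul_comm]
  calc _ ≤ √((∑ p : Fin m × Fin m, (v p.1 * v p.2) ^ 2) * ∑ p : Fin m × Fin m, B p.1 p.2 ^ 2) :=
        Real.abs_le_sqrt (Finset.sum_mul_sq_le_sq_mul_sq _ _ _)
    _ = _ := by rw [hv, hB, Real.sqrt_mul (sq_nonneg _), Real.sqrt_sq (dotProduct_self_nonneg v)]

lemma sub_mul_dotProduct_self_le_of_frobeniusNorm'_sub_smul_one_le {M : Matrix (Fin m) (Fin m) ℝ}
    {μ δ : ℝ} (h : frobeniusNorm' (M - μ • 1) ≤ δ) (v : Fin m → ℝ) :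
    (μ - δ) * (v ⬝ᵥ v) ≤ v ⬝ᵥ M *ᵥ v := by
  have hdev := neg_le_of_abs_le (abs_dotProduct_mulVec_le_frobeniusNorm' (M - μ • 1) v)
  rw [sub_mulVec, dotProduct_sub, smul_mulVec, one_mulVec, dotProduct_smul, smul_eq_mul] at hdev
  nlinarith [mul_le_mul_of_nonneg_right h (dotProduct_self_nonneg v)]

end Frobenius

section Conjugation

variable {n : Type*} [Fintype n] [DecidableEq n] {X R S : Matrix n n ℝ} {c ω : ℝ}

lemma IsHermitian.le_eigenvalues_mul_of_le_conj (hX : X.IsHermitian) (hR : R.IsSymm)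
    (hRR : R * R = X) (hc : ∀ v, c * (v ⬝ᵥ v) ≤ v ⬝ᵥ (R * S * R) *ᵥ v)
    (hSω : ∀ v, v ⬝ᵥ S *ᵥ v ≤ ω * (v ⬝ᵥ v)) (i : n) : c ≤ hX.eigenvalues i * ω := by
  set v := ⇑(hX.eigenvectorBasis i)
  calc c = c * (v ⬝ᵥ v) := by rw [hX.dotProduct_self_eigenvectorBasis, mul_one]
    _ ≤ R *ᵥ v ⬝ᵥ S *ᵥ (R *ᵥ v) := hR.dotProduct_mul_mul_mulVec (B := S) v ▸ hc v
    _ ≤ ω * (R *ᵥ v ⬝ᵥ R *ᵥ v) := hSω _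
    _ = hX.eigenvalues i * ω := by
      rw [← hR.dotProduct_mulVec_comm, mulVec_mulVec, hRR,
        hX.dotProduct_eigenvectorBasis_mulVec, mul_comm]

lemma PosSemidef.le_eigenvalues_mul_of_le_conj (hS : S.PosSemidef) (hR : R.IsSymm) (hRu : IsUnit R)
    (hRR : R * R = X) (hc : ∀ v, c * (v ⬝ᵥ v) ≤ v ⬝ᵥ (R * S * R) *ᵥ v)
    (hXω : ∀ v, v ⬝ᵥ X *ᵥ v ≤ ω * (v ⬝ᵥ v)) (i : n) : c ≤ hS.1.eigenvalues i * ω := by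
  obtain ⟨w, hRw⟩ := mulVec_surjective_iff_isUnit.mpr hRu (hS.1.eigenvectorBasis i)
  have hσ : c * (w ⬝ᵥ w) ≤ hS.1.eigenvalues i := by
    rw [← hS.1.dotProduct_eigenvectorBasis_mulVec, ← hRw, ← hR.dotProduct_mul_mul_mulVec]
    exact hc w
  have hw : 1 ≤ ω * (w ⬝ᵥ w) := by
    rw [← hS.1.dotProduct_self_eigenvectorBasis i, ← hRw, ← hR.dotProduct_mulVec_comm,
      mulVec_mulVec, hRR]
    exact hXω w
  have hω : 0 < ω := pos_of_mul_pos_left (one_pos.trans_le hw) (dotProduct_self_nonneg w)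
  rcases le_or_gt c 0 with hc0 | hc0
  · exact hc0.trans (mul_nonneg (hS.eigenvalues_nonneg i) hω.le)
  · calc c ≤ c * (ω * (w ⬝ᵥ w)) := le_mul_of_one_le_right hc0.le hw
      _ = c * (w ⬝ᵥ w) * ω := by ring
      _ ≤ hS.1.eigenvalues i * ω := mul_le_mul_of_nonneg_right hσ hω.le

end Conjugation

end Matrix

theorem eigenvalue_lower_bound_in_neighborhood_general {n : ℕ}
    (X S : Matrix (Fin n) (Fin n) ℝ) (γ μ ω : ℝ)
    (hω : 0 < ω)
    (hX : X.PosDef) (hS : S.PosDef)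
    (hN : frobeniusNorm'
        (hX.posSemidef.sqrt * S * hX.posSemidef.sqrt - μ • (1 : Matrix (Fin n) (Fin n) ℝ))
      ≤ γ * μ)
    (hXmax : ∀ i, hX.1.eigenvalues i ≤ ω)
    (hSmax : ∀ i, hS.1.eigenvalues i ≤ ω) :
    (∀ i, (1 - γ) * μ / ω ≤ hX.1.eigenvalues i) ∧
    (∀ i, (1 - γ) * μ / ω ≤ hS.1.eigenvalues i) := by
  set R := hX.posSemidef.sqrt
  have hR : R.IsSymm := isHermitian_iff_isSymm.mp hX.posSemidef.isHermitian_sqrt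
  have hRR : R * R = X := hX.posSemidef.sqrt_mul_self
  have hRu : IsUnit R := isUnit_of_mul_isUnit_left (hRR ▸ hX.isUnit)
  have hc := sub_mul_dotProduct_self_le_of_frobeniusNorm'_sub_smul_one_le hN
  refine ⟨fun i => ?_, fun i => ?_⟩ <;> rw [div_le_iff₀ hω, one_sub_mul]
  · exact hX.1.le_eigenvalues_mul_of_le_conj hR hRR hc
      (hS.1.dotProduct_mulVec_le_of_eigenvalues_le hSmax) i
  · exact hS.posSemidef.le_eigenvalues_mul_of_le_conj hR hRu hRR hc
      (hX.1.dotProduct_mulVec_le_of_eigenvalues_le hXmax) i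

/-- If `(X, y, S)` lies in the Frobenius neighborhood `N_F(γ)` of the
central path, i.e. `X ≻ 0`, `S ≻ 0` and `‖X^{1/2} S X^{1/2} - μI‖_F ≤ γμ` with
`μ = (X • S)/n` and `γ ∈ (0,1)`, and all eigenvalues of `X` and `S` are at most `ω`,
then every eigenvalue of `X` and of `S` is at least `(1-γ)μ/ω`. -/
theorem eigenvalue_lower_bound_in_neighborhood {n : ℕ}
    (X S : Matrix (Fin n) (Fin n) ℝ) (γ μ ω : ℝ)
    (hγ0 : 0 < γ) (hγ1 : γ < 1) (hω : 0 < ω)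
    (hX : X.PosDef) (hS : S.PosDef)
    (hμ : μ = (X * S).trace / n)
    (hN : frobeniusNorm'
        (hX.posSemidef.sqrt * S * hX.posSemidef.sqrt - μ • (1 : Matrix (Fin n) (Fin n) ℝ))
      ≤ γ * μ)
    (hXmax : ∀ i, hX.1.eigenvalues i ≤ ω)
    (hSmax : ∀ i, hS.1.eigenvalues i ≤ ω) :
    (∀ i, (1 - γ) * μ / ω ≤ hX.1.eigenvalues i) ∧
    (∀ i, (1 - γ) * μ / ω ≤ hS.1.eigenvalues i) :=
  eigenvalue_lower_bound_in_neighborhood_general X S γ μ ω hω hX hS hN hXmax hSmax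
end

section
/- For any full row-rank matrix T ∈ ℝ^{m×n} and any symmetric positive definite matrix D ∈ ℝ^{n×n}, the condition number satisfies κ(T D Tᵀ) ≤ κ(D)·κ(T Tᵀ). -/
/-!
The Rayleigh quotient `xᵀAx / xᵀx` of a symmetric matrix `A` lies between its extreme
eigenvalues, which it attains at unit eigenvectors. With `y = Tᵀx` one has
`xᵀ(TDTᵀ)x = yᵀDy` and `yᵀy = xᵀ(TTᵀ)x`, so the Rayleigh quotient of `TDTᵀ` is a Rayleigh
quotient of `D` times one of `TTᵀ`. Hence `λ_max(TDTᵀ) ≤ λ_max(D) λ_max(TTᵀ)` and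
`λ_min(TDTᵀ) ≥ λ_min(D) λ_min(TTᵀ)`, and full row rank makes `TTᵀ` positive definite, so
these lower bounds are positive.
-/

open Matrix

noncomputable def condNumber {k : ℕ} {M : Matrix (Fin k) (Fin k) ℝ}
    (hM : M.IsHermitian) : ℝ :=
  (⨆ i, hM.eigenvalues i) / (⨅ i, hM.eigenvalues i)

namespace Matrix

variable {m n : Type*} [Fintype m] [Fintype n]

theorem linearIndependent_row_iff_rank_eq_card {K : Type*} [Field K] {T : Matrix m n K} :
    LinearIndependent K T.row ↔ T.rank = Fintype.card m := by
  rw [linearIndependent_iff_card_eq_finrank_span, Set.finrank, rank_eq_finrank_span_row, eq_comm]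

theorem dotProduct_mul_mul_transpose_mulVec {R : Type*} [CommSemiring R] (B : Matrix m n R)
    (A : Matrix n n R) (x y : m → R) :
    x ⬝ᵥ (B * A * Bᵀ) *ᵥ y = (Bᵀ *ᵥ x) ⬝ᵥ A *ᵥ (Bᵀ *ᵥ y) := by
  simp only [← mulVec_mulVec, dotProduct_mulVec, mulVec_transpose]

theorem dotProduct_mul_transpose_mulVec {R : Type*} [CommSemiring R] (B : Matrix m n R)
    (x y : m → R) : x ⬝ᵥ (B * Bᵀ) *ᵥ y = (Bᵀ *ᵥ x) ⬝ᵥ (Bᵀ *ᵥ y) := by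
  simp only [← mulVec_mulVec, dotProduct_mulVec, mulVec_transpose]

namespace IsHermitian

variable [DecidableEq n] {A : Matrix n n ℝ} (hA : A.IsHermitian)

theorem dotProduct_mulVec_eq_sum_eigenvalues (x : n → ℝ) :
    x ⬝ᵥ A *ᵥ x =
      ∑ i, hA.eigenvalues i * ((hA.eigenvectorUnitary : Matrix n n ℝ)ᵀ *ᵥ x) i ^ 2 := by
  conv_lhs => rw [hA.spectral_theorem, Unitary.conjStarAlgAut_apply, star_eq_conjTranspose,
    conjTranspose_eq_transpose_of_trivial, dotProduct_mul_mul_transpose_mulVec]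
  simp only [dotProduct, mulVec_diagonal, Function.comp_apply, RCLike.ofReal_real_eq_id, id]
  exact Finset.sum_congr rfl fun i _ => by ring

theorem dotProduct_self_eq_sum_sq (x : n → ℝ) :
    x ⬝ᵥ x = ∑ i, ((hA.eigenvectorUnitary : Matrix n n ℝ)ᵀ *ᵥ x) i ^ 2 := by
  set U : Matrix n n ℝ := (hA.eigenvectorUnitary : Matrix n n ℝ)
  have hU : U * Uᵀ = 1 := by
    rw [← conjTranspose_eq_transpose_of_trivial, ← star_eq_conjTranspose]
    exact mem_unitaryGroup_iff.mp hA.eigenvectorUnitary.2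
  have h := dotProduct_mul_transpose_mulVec U x x
  rw [hU, one_mulVec] at h
  rw [h, dotProduct]
  simp only [sq]

theorem dotProduct_mulVec_le_iSup_eigenvalues_mul (x : n → ℝ) :
    x ⬝ᵥ A *ᵥ x ≤ (⨆ i, hA.eigenvalues i) * (x ⬝ᵥ x) := by
  rw [hA.dotProduct_mulVec_eq_sum_eigenvalues, hA.dotProduct_self_eq_sum_sq, Finset.mul_sum]
  gcongr with i
  exact le_ciSup (Set.finite_range _).bddAbove i

theorem iInf_eigenvalues_mul_le_dotProduct_mulVec (x : n → ℝ) :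
    (⨅ i, hA.eigenvalues i) * (x ⬝ᵥ x) ≤ x ⬝ᵥ A *ᵥ x := by
  rw [hA.dotProduct_mulVec_eq_sum_eigenvalues, hA.dotProduct_self_eq_sum_sq, Finset.mul_sum]
  gcongr with i
  exact ciInf_le (Set.finite_range _).bddBelow i

theorem eigenvalues_eq_dotProduct_mulVec (i : n) :
    hA.eigenvalues i = (hA.eigenvectorBasis i).ofLp ⬝ᵥ A *ᵥ (hA.eigenvectorBasis i).ofLp := by
  simpa using hA.eigenvalues_eq i

theorem dotProduct_eigenvectorBasis_self (i : n) :
    (hA.eigenvectorBasis i).ofLp ⬝ᵥ (hA.eigenvectorBasis i).ofLp = 1 := by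
  have h : inner ℝ (hA.eigenvectorBasis i) (hA.eigenvectorBasis i) = 1 := by
    rw [real_inner_self_eq_norm_sq, hA.eigenvectorBasis.orthonormal.1 i, one_pow]
  rwa [EuclideanSpace.inner_eq_star_dotProduct, star_trivial] at h

theorem iSup_eigenvalues_le_of_forall [Nonempty n] {c : ℝ}
    (h : ∀ x, x ⬝ᵥ A *ᵥ x ≤ c * (x ⬝ᵥ x)) : ⨆ i, hA.eigenvalues i ≤ c :=
  ciSup_le fun i => by
    simpa [← hA.eigenvalues_eq_dotProduct_mulVec, hA.dotProduct_eigenvectorBasis_self]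
      using h (hA.eigenvectorBasis i).ofLp

theorem le_iInf_eigenvalues_of_forall [Nonempty n] {c : ℝ}
    (h : ∀ x, c * (x ⬝ᵥ x) ≤ x ⬝ᵥ A *ᵥ x) : c ≤ ⨅ i, hA.eigenvalues i :=
  le_ciInf fun i => by
    simpa [← hA.eigenvalues_eq_dotProduct_mulVec, hA.dotProduct_eigenvectorBasis_self]
      using h (hA.eigenvectorBasis i).ofLp

end IsHermitian

theorem PosDef.iInf_eigenvalues_pos [DecidableEq n] [Nonempty n] {A : Matrix n n ℝ}
    (hA : A.PosDef) : 0 < ⨅ i, hA.1.eigenvalues i := by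
  obtain ⟨i, hi⟩ := exists_eq_ciInf_of_finite (f := hA.1.eigenvalues)
  exact hi ▸ hA.eigenvalues_pos i

theorem posDef_mul_transpose_of_rank_eq_card {T : Matrix m n ℝ}
    (hT : T.rank = Fintype.card m) : (T * Tᵀ).PosDef := by
  rw [← conjTranspose_eq_transpose_of_trivial]
  exact PosDef.mul_conjTranspose_self T
    (vecMul_injective_iff.mpr (linearIndependent_row_iff_rank_eq_card.mpr hT))

section Conjugation

variable [DecidableEq m] [DecidableEq n] [Nonempty m] (B : Matrix m n ℝ) {D : Matrix n n ℝ}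
  (hD : D.PosSemidef) (hBDB : (B * D * Bᵀ).IsHermitian) (hBB : (B * Bᵀ).IsHermitian)

theorem iSup_eigenvalues_mul_mul_transpose_le :
    ⨆ i, hBDB.eigenvalues i ≤ (⨆ i, hD.1.eigenvalues i) * ⨆ i, hBB.eigenvalues i := by
  refine hBDB.iSup_eigenvalues_le_of_forall fun x => ?_
  calc x ⬝ᵥ (B * D * Bᵀ) *ᵥ x = (Bᵀ *ᵥ x) ⬝ᵥ D *ᵥ (Bᵀ *ᵥ x) :=
        dotProduct_mul_mul_transpose_mulVec B D x x
    _ ≤ (⨆ i, hD.1.eigenvalues i) * (x ⬝ᵥ (B * Bᵀ) *ᵥ x) := by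
        rw [dotProduct_mul_transpose_mulVec]
        exact hD.1.dotProduct_mulVec_le_iSup_eigenvalues_mul _
    _ ≤ (⨆ i, hD.1.eigenvalues i) * ((⨆ i, hBB.eigenvalues i) * (x ⬝ᵥ x)) :=
        mul_le_mul_of_nonneg_left (hBB.dotProduct_mulVec_le_iSup_eigenvalues_mul x)
          (Real.iSup_nonneg hD.eigenvalues_nonneg)
    _ = _ := (mul_assoc _ _ _).symm

theorem iInf_eigenvalues_mul_le_iInf_eigenvalues_mul_mul_transpose :
    (⨅ i, hD.1.eigenvalues i) * (⨅ i, hBB.eigenvalues i) ≤ ⨅ i, hBDB.eigenvalues i := by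
  refine hBDB.le_iInf_eigenvalues_of_forall fun x => ?_
  calc (⨅ i, hD.1.eigenvalues i) * (⨅ i, hBB.eigenvalues i) * (x ⬝ᵥ x)
      = (⨅ i, hD.1.eigenvalues i) * ((⨅ i, hBB.eigenvalues i) * (x ⬝ᵥ x)) := mul_assoc _ _ _
    _ ≤ (⨅ i, hD.1.eigenvalues i) * (x ⬝ᵥ (B * Bᵀ) *ᵥ x) :=
        mul_le_mul_of_nonneg_left (hBB.iInf_eigenvalues_mul_le_dotProduct_mulVec x)
          (Real.iInf_nonneg hD.eigenvalues_nonneg)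
    _ ≤ (Bᵀ *ᵥ x) ⬝ᵥ D *ᵥ (Bᵀ *ᵥ x) := by
        rw [dotProduct_mul_transpose_mulVec]
        exact hD.1.iInf_eigenvalues_mul_le_dotProduct_mulVec _
    _ = x ⬝ᵥ (B * D * Bᵀ) *ᵥ x := (dotProduct_mul_mul_transpose_mulVec B D x x).symm

end Conjugation

end Matrix

/-- For any full row-rank matrix `T ∈ ℝ^{m×n}` and any symmetric
positive definite `D ∈ ℝ^{n×n}`, the condition numbers satisfy
`κ(T D Tᵀ) ≤ κ(D) * κ(T Tᵀ)`. -/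
theorem condNumber_conjugation_bound {m n : ℕ} [NeZero m] [NeZero n]
    (T : Matrix (Fin m) (Fin n) ℝ) (hT : T.rank = m)
    (D : Matrix (Fin n) (Fin n) ℝ) (hD : D.PosDef)
    (h1 : (T * D * Tᵀ).IsHermitian) (h2 : (T * Tᵀ).IsHermitian) :
    condNumber h1 ≤ condNumber hD.1 * condNumber h2 := by
  have hTT : (T * Tᵀ).PosDef := posDef_mul_transpose_of_rank_eq_card (by simpa using hT)
  calc condNumber h1
      ≤ (⨆ i, hD.1.eigenvalues i) * (⨆ i, h2.eigenvalues i) /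
          ((⨅ i, hD.1.eigenvalues i) * (⨅ i, h2.eigenvalues i)) :=
        div_le_div₀ (mul_nonneg (Real.iSup_nonneg hD.posSemidef.eigenvalues_nonneg)
            (Real.iSup_nonneg hTT.posSemidef.eigenvalues_nonneg))
          (iSup_eigenvalues_mul_mul_transpose_le T hD.posSemidef h1 h2)
          (mul_pos hD.iInf_eigenvalues_pos hTT.iInf_eigenvalues_pos)
          (iInf_eigenvalues_mul_le_iInf_eigenvalues_mul_mul_transpose T hD.posSemidef h1 h2)
    _ = condNumber hD.1 * condNumber h2 := mul_div_mul_comm _ _ _ _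
end

section
/- If (X̄, ȳ, S̄) is an ε-precise solution of the infeasible-non-interior refining problem, meaning λ_min(X̄ + ηX) ≥ -ε, λ_min(ηS - Σᵢ ȳᵢAᵢ) ≥ -ε, |η b̄ᵢ - Aᵢ • X̄| ≤ ε for all i (where b̄ᵢ = bᵢ - Aᵢ • X), and (X̄ + ηX) • (ηS - Σᵢ ȳᵢAᵢ) ≤ ε, then with η > 1 the point (X + (1/η)X̄, y + (1/η)ȳ) is an (ε/η)-precise solution of the original SDO: λ_min(X + (1/η)X̄) ≥ -ε/η, λ_min(C - Σᵢ(yᵢ + (1/η)ȳᵢ)Aᵢ) ≥ -ε/η, |bᵢ - Aᵢ • (X + (1/η)X̄)| ≤ ε/η for all i, and the complementarity product is at most ε/η. -/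
open Matrix Finset

/-- `eigMinGE M c` states that every eigenvalue of the symmetric matrix `M` is at least
`c`, expressed as `M - c • I ⪰ 0`. -/
def eigMinGE {n : ℕ} (M : Matrix (Fin n) (Fin n) ℝ) (c : ℝ) : Prop :=
  (M - c • (1 : Matrix (Fin n) (Fin n) ℝ)).PosSemidef

/-! The refined point is the refining point scaled by `η⁻¹`, so its eigenvalue bounds and
feasibility residuals shrink by `η⁻¹` and its duality gap by `η⁻²`. The gap bound `η⁻² ε ≤ η⁻¹ ε`
needs `0 ≤ ε`, which holds because the trace of a product of positive semidefinite matrices is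
nonnegative. -/

open scoped ComplexOrder MatrixOrder in
theorem Matrix.PosSemidef.trace_mul_nonneg {ι 𝕜 : Type*} [Fintype ι] [RCLike 𝕜]
    {A B : Matrix ι ι 𝕜} (hA : A.PosSemidef) (hB : B.PosSemidef) : 0 ≤ (A * B).trace := by
  classical
  obtain ⟨D, rfl⟩ := CStarAlgebra.nonneg_iff_eq_star_mul_self.mp hB.nonneg
  rw [star_eq_conjTranspose, ← mul_assoc, trace_mul_cycle]
  exact (hA.mul_mul_conjTranspose_same D).trace_nonneg

namespace eigMinGE

variable {n : ℕ} {M N : Matrix (Fin n) (Fin n) ℝ} {c : ℝ}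

theorem posSemidef (h : eigMinGE M c) (hc : 0 ≤ c) : M.PosSemidef := by
  simpa using h.add (PosSemidef.one.smul hc)

theorem smul (h : eigMinGE M c) {t : ℝ} (ht : 0 ≤ t) : eigMinGE (t • M) (t * c) := by
  unfold eigMinGE
  rw [mul_smul, ← smul_sub]
  exact Matrix.PosSemidef.smul h ht

theorem nonneg_of_trace_mul_le {ε : ℝ} (hM : eigMinGE M (-ε)) (hN : eigMinGE N (-ε))
    (hgap : (M * N).trace ≤ ε) : 0 ≤ ε := by
  by_contra! hε
  have := (hM.posSemidef (by linarith)).trace_mul_nonneg (hN.posSemidef (by linarith))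
  linarith

end eigMinGE

/-- If `(X̄, ȳ, S̄)` is an ε-precise solution of the
infeasible-non-interior refining problem, then with `η > 1` the point
`(X + (1/η)X̄, y + (1/η)ȳ)` is an `(ε/η)`-precise solution of the original SDO. -/
theorem infeasible_non_interior_IR_step {n m : ℕ}
    (A : Fin m → Matrix (Fin n) (Fin n) ℝ) (C : Matrix (Fin n) (Fin n) ℝ)
    (b : Fin m → ℝ) (ε η : ℝ) (hη : 1 < η)
    (X S Xbar : Matrix (Fin n) (Fin n) ℝ) (y ybar : Fin m → ℝ) (bbar : Fin m → ℝ)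
    (hS : S = C - ∑ i, y i • A i)
    (hbbar : ∀ i, bbar i = b i - (A i * X).trace)
    -- ε-precise solution of the refining problem
    (hXlb : eigMinGE (Xbar + η • X) (-ε))
    (hSlb : eigMinGE (η • S - ∑ i, ybar i • A i) (-ε))
    (hfeas : ∀ i, |η * bbar i - (A i * Xbar).trace| ≤ ε)
    (hgap : ((Xbar + η • X) * (η • S - ∑ i, ybar i • A i)).trace ≤ ε) :
    -- the updated point is an (ε/η)-precise solution of the original SDO
    eigMinGE (X + η⁻¹ • Xbar) (-(ε / η)) ∧
    eigMinGE (C - ∑ i, (y i + η⁻¹ * ybar i) • A i) (-(ε / η)) ∧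
    (∀ i, |b i - (A i * (X + η⁻¹ • Xbar)).trace| ≤ ε / η) ∧
    ((X + η⁻¹ • Xbar) * (C - ∑ i, (y i + η⁻¹ * ybar i) • A i)).trace ≤ ε / η := by
  have hη0 : 0 < η := one_pos.trans hη
  have hε : 0 ≤ ε := hXlb.nonneg_of_trace_mul_le hSlb hgap
  have hscale : -(ε / η) = η⁻¹ * -ε := by rw [mul_neg, inv_mul_eq_div]
  have hX : X + η⁻¹ • Xbar = η⁻¹ • (Xbar + η • X) := by
    rw [smul_add, smul_smul, inv_mul_cancel₀ hη0.ne', one_smul, add_comm]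
  have hC : C - ∑ i, (y i + η⁻¹ * ybar i) • A i = η⁻¹ • (η • S - ∑ i, ybar i • A i) := by
    simp only [hS, smul_sub, smul_sum, smul_smul, inv_mul_cancel₀ hη0.ne',
      inv_mul_cancel_left₀ hη0.ne', one_smul, add_smul, sum_add_distrib]
    abel
  have hres (i : Fin m) :
      b i - (A i * (X + η⁻¹ • Xbar)).trace = (η * bbar i - (A i * Xbar).trace) / η := by
    rw [hbbar i, mul_add, Matrix.mul_smul, trace_add, trace_smul, smul_eq_mul]
    field_simp
    ring
  refine ⟨?_, ?_, fun i => ?_, ?_⟩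
  · rw [hX, hscale]
    exact hXlb.smul (inv_nonneg.2 hη0.le)
  · rw [hC, hscale]
    exact hSlb.smul (inv_nonneg.2 hη0.le)
  · rw [hres i, abs_div, abs_of_pos hη0]
    exact div_le_div_of_nonneg_right (hfeas i) hη0.le
  · rw [hX, hC, smul_mul_smul_comm, trace_smul, smul_eq_mul]
    calc η⁻¹ * η⁻¹ * ((Xbar + η • X) * (η • S - ∑ i, ybar i • A i)).trace
        ≤ η⁻¹ * η⁻¹ * ε := by gcongr
      _ ≤ 1 * η⁻¹ * ε := by gcongr; exact inv_le_one_of_one_le₀ hη.le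
      _ = ε / η := by ring
end

section
/- If (X̄, ȳ, S̄) is an ε-precise solution of the infeasible-interior refining problem, meaning X̄ + ηX ⪰ 0, S̄ + ηS ⪰ 0, ‖ηC̄ - Σᵢ ȳᵢAᵢ - S̄‖ ≤ ε where C̄ = C - Σᵢ yᵢAᵢ - S, |η b̄ᵢ - Aᵢ • X̄| ≤ ε where b̄ᵢ = bᵢ - Aᵢ • X, and (X̄ + ηX) • (S̄ + ηS) ≤ ε, then with η > 1 the point (X + (1/η)X̄, y + (1/η)ȳ, S + (1/η)S̄) satisfies: X + (1/η)X̄ ⪰ 0, S + (1/η)S̄ ⪰ 0, ‖C - Σᵢ(yᵢ + (1/η)ȳᵢ)Aᵢ - (S + (1/η)S̄)‖ ≤ ε/η, |bᵢ - Aᵢ • (X + (1/η)X̄)| ≤ ε/η, and (X + (1/η)X̄) • (S + (1/η)S̄) ≤ ε/η². -/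
open Matrix Finset

/-! Each quantity at the updated point is the corresponding quantity of the refining
problem rescaled by `η⁻¹` (the complementarity product by `η⁻²`), so all bounds shrink
accordingly and semidefiniteness is preserved. -/

lemma frobeniusNorm'_smul {n : ℕ} (c : ℝ) (M : Matrix (Fin n) (Fin n) ℝ) :
    frobeniusNorm' (c • M) = |c| * frobeniusNorm' M := by
  unfold frobeniusNorm'
  rw [← Real.sqrt_sq_eq_abs, ← Real.sqrt_mul (sq_nonneg c)]
  simp [mul_pow, Finset.mul_sum]

section Rescaling

variable {K V : Type*} [Field K] [AddCommGroup V] [Module K V] {c : K}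

lemma add_inv_smul_eq_inv_smul_add_smul (hc : c ≠ 0) (x x' : V) :
    x + c⁻¹ • x' = c⁻¹ • (x' + c • x) := by
  rw [smul_add, inv_smul_smul₀ hc, add_comm]

lemma sub_sum_smul_sub_inv_smul_eq {ι : Type*} [Fintype ι] (hc : c ≠ 0) (a : ι → V)
    (v s s' : V) (y y' : ι → K) :
    v - ∑ i, (y i + c⁻¹ * y' i) • a i - (s + c⁻¹ • s') =
      c⁻¹ • (c • (v - ∑ i, y i • a i - s) - ∑ i, y' i • a i - s') := by
  simp only [smul_sub, inv_smul_smul₀ hc, add_smul, mul_smul, Finset.sum_add_distrib,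
    Finset.smul_sum]
  abel

lemma sub_map_add_inv_smul_eq (hc : c ≠ 0) (f : V →ₗ[K] K) (b : K) (x x' : V) :
    b - f (x + c⁻¹ • x') = c⁻¹ * (c * (b - f x) - f x') := by
  rw [map_add, map_smul, smul_eq_mul]
  field_simp
  ring

end Rescaling

/-- If `(X̄, ȳ, S̄)` is an ε-precise solution of the
infeasible-interior refining problem, then with `η > 1` the point
`(X + (1/η)X̄, y + (1/η)ȳ, S + (1/η)S̄)` is an `(ε/η)`-precise solution of the
original SDO, with complementarity product at most `ε/η²`. -/
theorem infeasible_interior_IR_step {n m : ℕ}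
    (A : Fin m → Matrix (Fin n) (Fin n) ℝ) (C : Matrix (Fin n) (Fin n) ℝ)
    (b : Fin m → ℝ) (ε η : ℝ) (hη : 1 < η)
    (X S Xbar Sbar : Matrix (Fin n) (Fin n) ℝ) (y ybar : Fin m → ℝ)
    (bbar : Fin m → ℝ) (Cbar : Matrix (Fin n) (Fin n) ℝ)
    (hCbar : Cbar = C - (∑ i, y i • A i) - S)
    (hbbar : ∀ i, bbar i = b i - (A i * X).trace)
    -- ε-precise solution of the refining problem
    (hXpsd : (Xbar + η • X).PosSemidef)
    (hSpsd : (Sbar + η • S).PosSemidef)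
    (hdres : frobeniusNorm' (η • Cbar - (∑ i, ybar i • A i) - Sbar) ≤ ε)
    (hpres : ∀ i, |η * bbar i - (A i * Xbar).trace| ≤ ε)
    (hgap : ((Xbar + η • X) * (Sbar + η • S)).trace ≤ ε) :
    -- the updated point is an (ε/η)-precise solution of the original SDO
    (X + η⁻¹ • Xbar).PosSemidef ∧
    (S + η⁻¹ • Sbar).PosSemidef ∧
    frobeniusNorm' (C - (∑ i, (y i + η⁻¹ * ybar i) • A i) - (S + η⁻¹ • Sbar)) ≤ ε / η ∧
    (∀ i, |b i - (A i * (X + η⁻¹ • Xbar)).trace| ≤ ε / η) ∧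
    ((X + η⁻¹ • Xbar) * (S + η⁻¹ • Sbar)).trace ≤ ε / η ^ 2 := by
  have hη0 : 0 < η := one_pos.trans hη
  have hinv : 0 ≤ η⁻¹ := inv_nonneg.mpr hη0.le
  have hX := add_inv_smul_eq_inv_smul_add_smul hη0.ne' X Xbar
  have hS := add_inv_smul_eq_inv_smul_add_smul hη0.ne' S Sbar
  refine ⟨hX ▸ hXpsd.smul hinv, hS ▸ hSpsd.smul hinv, ?_, fun i => ?_, ?_⟩
  · rw [sub_sum_smul_sub_inv_smul_eq hη0.ne', ← hCbar, frobeniusNorm'_smul,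
      abs_of_nonneg hinv, div_eq_inv_mul]
    gcongr
  · have hres := sub_map_add_inv_smul_eq hη0.ne'
      (Matrix.traceLinearMap (Fin n) ℝ ℝ ∘ₗ LinearMap.mulLeft ℝ (A i)) (b i) X Xbar
    simp only [LinearMap.comp_apply, LinearMap.mulLeft_apply, traceLinearMap_apply,
      ← hbbar i] at hres
    rw [hres, abs_mul, abs_of_nonneg hinv, div_eq_inv_mul]
    gcongr
    exact hpres i
  · rw [hX, hS, smul_mul_smul_comm, trace_smul, smul_eq_mul, ← mul_inv, ← sq,
      div_eq_inv_mul]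
    gcongr
end
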